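/- arXiv:2605.15570 — 5 statements merged into one kernel-verified Lean document; each statement's English description precedes it below -/
import Mathlib

section
/- Let s, y ∈ ℝⁿ be nonzero with sᵀy > 0, λ > 0, t > 0, and Q = λI - (λ/2)(y sᵀ)/(yᵀs) - (λ/2)(s yᵀ)/(yᵀs) + t(s sᵀ)/(yᵀs). Then tr(QᵀQ) = λ²(n - 3/2) + (λ²/2)·(‖s‖²‖y‖²)/(sᵀy)² + t²·‖s‖⁴/(sᵀy)². -/
/-!
Write `σ = sᵀy` and `Q = λI + M`, where `M = -a(y sᵀ + s yᵀ) + c s sᵀ` is symmetric, with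
`a = λ/(2σ)` and `c = t/σ`. Then `tr(QᵀQ) = λ²n + 2λ tr M + tr M²`, and every trace of a product of
rank-one matrices `u vᵀ` is a product of two inner products. The terms linear in `c` carry the
factor `λ - 2aσ = 0`, which is why no cross term between `λ` and `t` survives.
-/

open Matrix

namespace Matrix

variable {ι R : Type*} [CommRing R]

theorem trace_vecMulVec_mul_vecMulVec [Fintype ι] (u v w x : ι → R) :
    trace (vecMulVec u v * vecMulVec w x) = (v ⬝ᵥ w) * (u ⬝ᵥ x) := by
  rw [vecMulVec_mul_vecMulVec, trace_vecMulVec, dotProduct_smul, smul_eq_mul]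

variable [DecidableEq ι]

def symmRankTwoUpdate (lam a c : R) (s y : ι → R) : Matrix ι ι R :=
  lam • 1 - a • vecMulVec y s - a • vecMulVec s y + c • vecMulVec s s

theorem transpose_symmRankTwoUpdate (lam a c : R) (s y : ι → R) :
    (symmRankTwoUpdate lam a c s y)ᵀ = symmRankTwoUpdate lam a c s y := by
  simp only [symmRankTwoUpdate, transpose_add, transpose_sub, transpose_smul, transpose_one,
    transpose_vecMulVec]
  abel

variable [Fintype ι]

theorem trace_symmRankTwoUpdate_mul_self (lam a c : R) (s y : ι → R) :
    trace (symmRankTwoUpdate lam a c s y * symmRankTwoUpdate lam a c s y)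
      = lam ^ 2 * Fintype.card ι - 4 * lam * a * (s ⬝ᵥ y)
        + 2 * a ^ 2 * ((s ⬝ᵥ y) ^ 2 + (s ⬝ᵥ s) * (y ⬝ᵥ y))
        + 2 * c * (s ⬝ᵥ s) * (lam - 2 * a * (s ⬝ᵥ y)) + c ^ 2 * (s ⬝ᵥ s) ^ 2 := by
  simp only [symmRankTwoUpdate, sub_mul, mul_sub, add_mul, mul_add, Matrix.smul_mul,
    Matrix.mul_smul, Matrix.one_mul, Matrix.mul_one, trace_add, trace_sub, trace_smul, trace_one,
    trace_vecMulVec, trace_vecMulVec_mul_vecMulVec, smul_eq_mul]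
  rw [dotProduct_comm y s]
  ring

end Matrix

theorem stmt_1_general (n : ℕ) (s y : Fin n → ℝ)
    (hsy : 0 < s ⬝ᵥ y) (lam t : ℝ)
    (Q : Matrix (Fin n) (Fin n) ℝ)
    (hQ : Q = lam • (1 : Matrix (Fin n) (Fin n) ℝ)
      - (lam / 2 / (y ⬝ᵥ s)) • vecMulVec y s
      - (lam / 2 / (y ⬝ᵥ s)) • vecMulVec s y
      + (t / (y ⬝ᵥ s)) • vecMulVec s s) :
    Matrix.trace (Qᵀ * Q)
      = lam ^ 2 * (n - 3 / 2)
        + lam ^ 2 / 2 * ((s ⬝ᵥ s) * (y ⬝ᵥ y)) / (s ⬝ᵥ y) ^ 2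
        + t ^ 2 * (s ⬝ᵥ s) ^ 2 / (s ⬝ᵥ y) ^ 2 := by
  have hQ' : Q = symmRankTwoUpdate lam (lam / 2 / (s ⬝ᵥ y)) (t / (s ⬝ᵥ y)) s y := by
    rw [hQ, dotProduct_comm y s, symmRankTwoUpdate]
  have hσ : s ⬝ᵥ y ≠ 0 := hsy.ne'
  have hcancel : lam - 2 * (lam / 2 / (s ⬝ᵥ y)) * (s ⬝ᵥ y) = 0 := by
    field_simp
    ring
  rw [hQ', transpose_symmRankTwoUpdate, trace_symmRankTwoUpdate_mul_self, hcancel,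
    Fintype.card_fin]
  field_simp
  ring

theorem stmt_1 (n : ℕ) (hn : 1 ≤ n) (s y : Fin n → ℝ) (hs : s ≠ 0) (hy : y ≠ 0)
    (hsy : 0 < s ⬝ᵥ y) (lam t : ℝ) (hlam : 0 < lam) (ht : 0 < t)
    (Q : Matrix (Fin n) (Fin n) ℝ)
    (hQ : Q = lam • (1 : Matrix (Fin n) (Fin n) ℝ)
      - (lam / 2 / (y ⬝ᵥ s)) • vecMulVec y s
      - (lam / 2 / (y ⬝ᵥ s)) • vecMulVec s y
      + (t / (y ⬝ᵥ s)) • vecMulVec s s) :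
    Matrix.trace (Qᵀ * Q)
      = lam ^ 2 * (n - 3 / 2)
        + lam ^ 2 / 2 * ((s ⬝ᵥ s) * (y ⬝ᵥ y)) / (s ⬝ᵥ y) ^ 2
        + t ^ 2 * (s ⬝ᵥ s) ^ 2 / (s ⬝ᵥ y) ^ 2 :=
  stmt_1_general n s y hsy lam t Q hQ
end

section
/- Let G, p, w ∈ ℝⁿ with G ≠ 0 and pᵀw ≠ 0, let τ ∈ [0,1], λ ≥ α_min > (1+τ)/2, define θ = (Gᵀw)/(pᵀw) - λ·(‖w‖²/(pᵀw))·(Gᵀp)/(pᵀw), a = (Gᵀp)/(pᵀw), and d = -λG + θp + τ·a·w. Then Gᵀd ≤ -α_min·(1 - (1+τ)²/(4α_min²))·‖G‖². -/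
open RealInnerProductSpace

theorem stmt_6 (n : ℕ) (G p w : EuclideanSpace ℝ (Fin n)) (hG : G ≠ 0)
    (hpw : ⟪p, w⟫ ≠ 0) (τ lam αmin : ℝ) (hτ0 : 0 ≤ τ) (hτ1 : τ ≤ 1)
    (hαmin : (1 + τ) / 2 < αmin) (hlam : αmin ≤ lam)
    (θ a : ℝ)
    (hθ : θ = ⟪G, w⟫ / ⟪p, w⟫ - lam * (‖w‖ ^ 2 / ⟪p, w⟫) * (⟪G, p⟫ / ⟪p, w⟫))
    (ha : a = ⟪G, p⟫ / ⟪p, w⟫)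
    (d : EuclideanSpace ℝ (Fin n)) (hd : d = -(lam • G) + θ • p + (τ * a) • w) :
    ⟪G, d⟫ ≤ -(αmin * (1 - (1 + τ) ^ 2 / (4 * αmin ^ 2)) * ‖G‖ ^ 2) := by
  have hα0 : 0 < αmin := by nlinarith
  have hlam0 : 0 < lam := lt_of_lt_of_le hα0 hlam
  have hgw : |⟪G, w⟫| ≤ ‖G‖ * ‖w‖ := abs_real_inner_le_norm G w
  have hG2 : (0:ℝ) ≤ ‖G‖ ^ 2 := by positivity
  -- compute the inner product
  have key : ⟪G, d⟫ = -(lam * ‖G‖ ^ 2) + ((1 + τ) * a * ⟪G, w⟫ - lam * ‖w‖ ^ 2 * a ^ 2) := by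
    subst hd
    rw [inner_add_right, inner_add_right, inner_neg_right, real_inner_smul_right,
      real_inner_smul_right, real_inner_smul_right, real_inner_self_eq_norm_sq]
    rw [hθ, ha]
    field_simp
    ring
  rw [key]
  have h1 : a * ⟪G, w⟫ ≤ |a| * (‖G‖ * ‖w‖) := by
    calc a * ⟪G, w⟫ ≤ |a * ⟪G, w⟫| := le_abs_self _
      _ = |a| * |⟪G, w⟫| := abs_mul _ _
      _ ≤ |a| * (‖G‖ * ‖w‖) := mul_le_mul_of_nonneg_left hgw (abs_nonneg a)
  -- AM-GM step
  have step1 : (1 + τ) * a * ⟪G, w⟫ - lam * ‖w‖ ^ 2 * a ^ 2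
      ≤ (1 + τ) ^ 2 * ‖G‖ ^ 2 / (4 * lam) := by
    rw [le_div_iff₀ (by positivity : (0:ℝ) < 4 * lam)]
    have habs : (|a| * ‖w‖) ^ 2 = a ^ 2 * ‖w‖ ^ 2 := by rw [mul_pow, sq_abs]
    have h1' : a * ⟪G, w⟫ ≤ (|a| * ‖w‖) * ‖G‖ := by rw [mul_comm ‖G‖ ‖w‖, ← mul_assoc] at h1; linarith
    nlinarith [sq_nonneg (2 * lam * (|a| * ‖w‖) - (1 + τ) * ‖G‖), habs,
      mul_le_mul_of_nonneg_left habs.le (by positivity : (0:ℝ) ≤ 4 * lam ^ 2),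
      mul_le_mul_of_nonneg_left h1' (by positivity : (0:ℝ) ≤ 4 * lam * (1 + τ))]
  -- monotonicity in lam
  have e : -(αmin * (1 - (1 + τ) ^ 2 / (4 * αmin ^ 2)) * ‖G‖ ^ 2)
      = -(αmin * ‖G‖ ^ 2) + (1 + τ) ^ 2 * ‖G‖ ^ 2 / (4 * αmin) := by
    field_simp
    ring
  rw [e]
  have h2 : (1 + τ) ^ 2 * ‖G‖ ^ 2 / (4 * lam) ≤ (1 + τ) ^ 2 * ‖G‖ ^ 2 / (4 * αmin) :=
    div_le_div_of_nonneg_left (by positivity) (by positivity) (by linarith)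
  have h3 : αmin * ‖G‖ ^ 2 ≤ lam * ‖G‖ ^ 2 := mul_le_mul_of_nonneg_right hlam hG2
  linarith
end

section
/- Let G: ℝⁿ → ℝⁿ be L-Lipschitz, x, p ∈ ℝⁿ with G(x)ᵀp ≤ -α_min‖G(x)‖² for some α_min > 0, and suppose for some α̃ > 0 and constants ζ, ζ₂ > 0 that G(x + α̃p)ᵀp > -ζ·α̃·‖p‖²·ζ₂. Then α_min‖G(x)‖² ≤ α̃(L + ζζ₂)‖p‖². -/
open RealInnerProductSpace

theorem stmt_9 (n : ℕ) (G : EuclideanSpace ℝ (Fin n) → EuclideanSpace ℝ (Fin n))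
    (L : ℝ) (hL : 0 < L) (hLip : ∀ u v, ‖G u - G v‖ ≤ L * ‖u - v‖)
    (x p : EuclideanSpace ℝ (Fin n)) (αmin : ℝ) (hαmin : 0 < αmin)
    (hdesc : ⟪G x, p⟫ ≤ -(αmin * ‖G x‖ ^ 2))
    (α ζ ζ2 : ℝ) (hα : 0 < α) (hζ : 0 < ζ) (hζ2 : 0 < ζ2)
    (hviol : ⟪G (x + α • p), p⟫ > -(ζ * α * ‖p‖ ^ 2 * ζ2)) :
    αmin * ‖G x‖ ^ 2 ≤ α * (L + ζ * ζ2) * ‖p‖ ^ 2 := by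
  have h1 : ⟪G (x + α • p) - G x, p⟫ ≤ L * α * ‖p‖ ^ 2 := by
    calc ⟪G (x + α • p) - G x, p⟫ ≤ ‖G (x + α • p) - G x‖ * ‖p‖ :=
          real_inner_le_norm _ _
      _ ≤ (L * ‖x + α • p - x‖) * ‖p‖ := by
          gcongr; exact hLip _ _
      _ = L * α * ‖p‖ ^ 2 := by
          have : x + α • p - x = α • p := by abel
          rw [this, norm_smul, Real.norm_eq_abs, abs_of_pos hα]; ring
  have h2 : ⟪G (x + α • p) - G x, p⟫ = ⟪G (x + α • p), p⟫ - ⟪G x, p⟫ := by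
    rw [inner_sub_left]
  nlinarith [hviol, hdesc, h1, h2]
end

section
/- Let G: ℝⁿ → ℝⁿ be monotone and x* ∈ ℝⁿ with G(x*) = 0. Suppose z ∈ ℝⁿ satisfies G(z)ᵀ(x - z) ≥ ζ‖x - z‖²‖G(z)‖ with G(z) ≠ 0, and let μ = G(z)ᵀ(x - z)/‖G(z)‖², γ ∈ (0,2), and x⁺ = Π_Γ(x - γμG(z)) where Γ is a closed convex set containing x*. Then ‖x⁺ - x*‖² ≤ ‖x - x*‖² - γ(2-γ)ζ²‖x - z‖⁴. -/
open RealInnerProductSpace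

set_option maxHeartbeats 800000

theorem stmt_10 (n : ℕ) (G : EuclideanSpace ℝ (Fin n) → EuclideanSpace ℝ (Fin n))
    (hmono : ∀ u v, 0 ≤ ⟪G u - G v, u - v⟫)
    (Γ : Set (EuclideanSpace ℝ (Fin n))) (hΓc : IsClosed Γ) (hΓconv : Convex ℝ Γ)
    (xstar : EuclideanSpace ℝ (Fin n)) (hxstar : xstar ∈ Γ) (hGxstar : G xstar = 0)
    (x z : EuclideanSpace ℝ (Fin n)) (hGz : G z ≠ 0)
    (ζ : ℝ) (hζ : 0 < ζ) (hls : ⟪G z, x - z⟫ ≥ ζ * ‖x - z‖ ^ 2 * ‖G z‖)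
    (μ γ : ℝ) (hμ : μ = ⟪G z, x - z⟫ / ‖G z‖ ^ 2) (hγ0 : 0 < γ) (hγ2 : γ < 2)
    (xplus : EuclideanSpace ℝ (Fin n)) (hxplusΓ : xplus ∈ Γ)
    (hproj : IsMinOn (fun u => ‖u - (x - (γ * μ) • G z)‖) Γ xplus) :
    ‖xplus - xstar‖ ^ 2 ≤ ‖x - xstar‖ ^ 2 - γ * (2 - γ) * ζ ^ 2 * ‖x - z‖ ^ 4 := by
  set y := x - (γ * μ) • G z with hy
  have hg : (0:ℝ) < ‖G z‖ := norm_pos_iff.mpr hGz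
  -- obtuse angle property
  have hiInf : ‖y - xplus‖ = ⨅ w : Γ, ‖y - w‖ := by
    haveI : Nonempty Γ := ⟨⟨xplus, hxplusΓ⟩⟩
    apply le_antisymm
    · exact le_ciInf fun w => by
        simpa [norm_sub_rev] using hproj w.2
    · exact ciInf_le ⟨0, fun _ ⟨_, h⟩ => h ▸ norm_nonneg _⟩ (⟨xplus, hxplusΓ⟩ : Γ)
  have hobt : ⟪y - xplus, xstar - xplus⟫ ≤ 0 :=
    ((norm_eq_iInf_iff_real_inner_le_zero hΓconv hxplusΓ).mp hiInf) xstar hxstar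
  have hstep1 : ‖xplus - xstar‖ ^ 2 ≤ ‖y - xstar‖ ^ 2 := by
    have hexp : ‖y - xstar‖ ^ 2
        = ‖y - xplus‖ ^ 2 + 2 * ⟪y - xplus, xplus - xstar⟫ + ‖xplus - xstar‖ ^ 2 := by
      have : y - xstar = (y - xplus) + (xplus - xstar) := by abel
      rw [this, @norm_add_sq_real]
    have h2 : (0:ℝ) ≤ ⟪y - xplus, xplus - xstar⟫ := by
      have : ⟪y - xplus, xplus - xstar⟫ = - ⟪y - xplus, xstar - xplus⟫ := by
        rw [← inner_neg_right]; congr 1; abel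
      linarith [this ▸ neg_nonneg.mpr hobt]
    nlinarith [sq_nonneg ‖y - xplus‖]
  -- expand ‖y - xstar‖²
  have hexp2 : ‖y - xstar‖ ^ 2
      = ‖x - xstar‖ ^ 2 - 2 * (γ * μ) * ⟪G z, x - xstar⟫ + (γ * μ) ^ 2 * ‖G z‖ ^ 2 := by
    have : y - xstar = (x - xstar) - (γ * μ) • G z := by rw [hy]; abel
    rw [this, @norm_sub_sq_real, norm_smul, real_inner_smul_right,
      real_inner_comm]
    simp [mul_pow]
    ring
  -- monotonicity
  have hmon : (0:ℝ) ≤ ⟪G z, z - xstar⟫ := by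
    have := hmono z xstar
    rwa [hGxstar, sub_zero] at this
  have hsplit : ⟪G z, x - xstar⟫ = ⟪G z, x - z⟫ + ⟪G z, z - xstar⟫ := by
    rw [← inner_add_right]; congr 1; abel
  have hc : ⟪G z, x - z⟫ = μ * ‖G z‖ ^ 2 := by
    rw [hμ]; field_simp
  have hμ0 : 0 ≤ μ := by
    rw [hμ]
    have hc0 : 0 ≤ ⟪G z, x - z⟫ := le_trans (by positivity) hls
    exact div_nonneg hc0 (by positivity)
  have hGge : μ * ‖G z‖ ^ 2 ≤ ⟪G z, x - xstar⟫ := by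
    rw [hsplit, ← hc]; linarith
  have hμg : ζ ^ 2 * ‖x - z‖ ^ 4 ≤ μ ^ 2 * ‖G z‖ ^ 2 := by
    have h1 : ζ * ‖x - z‖ ^ 2 * ‖G z‖ ≤ μ * ‖G z‖ ^ 2 := hc ▸ hls
    have h2 : (ζ * ‖x - z‖ ^ 2 * ‖G z‖) ^ 2 ≤ (μ * ‖G z‖ ^ 2) ^ 2 := by
      have hl : 0 ≤ ζ * ‖x - z‖ ^ 2 * ‖G z‖ := by positivity
      exact pow_le_pow_left₀ hl h1 2
    nlinarith [h2, mul_pos hg hg]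
  have hA : ‖y - xstar‖ ^ 2 ≤ ‖x - xstar‖ ^ 2 - γ * (2 - γ) * (μ ^ 2 * ‖G z‖ ^ 2) := by
    rw [hexp2]
    have hmm : 2 * (γ * μ) * (μ * ‖G z‖ ^ 2) ≤ 2 * (γ * μ) * ⟪G z, x - xstar⟫ :=
      mul_le_mul_of_nonneg_left hGge (by positivity)
    linarith [hmm]
  have hB : γ * (2 - γ) * (ζ ^ 2 * ‖x - z‖ ^ 4) ≤ γ * (2 - γ) * (μ ^ 2 * ‖G z‖ ^ 2) :=
    mul_le_mul_of_nonneg_left hμg (by nlinarith)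
  nlinarith [hstep1, hA, hB]
end

section
/- Under the hypotheses of the GMOPCGM trust-region lemma (s = αp_{k-1}, v = y + τs with ‖y‖ ≤ Lγ‖s‖, yᵀs ≥ 0, λ ∈ [α_min, α_max]), the direction p_k = -M G_k + θ p_{k-1} with M = λ + θ(G_kᵀp_{k-1})/‖G_k‖² satisfies ‖p_k‖ ≤ (α_max + 2(1+α_max)(Lγ+τ)/τ)·‖G_k‖. -/
/-!
The direction is bounded by `|λ| ‖G‖ + 2 |θ| ‖p‖`, one `|θ| ‖p‖` coming from the correction
`θ ⟪G, p⟫ / ‖G‖²` in `M`. Since `v = y + τ s` with `⟪y, s⟫ ≥ 0`, the curvature `⟪p, v⟫` is at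
least `τ ‖s‖ ‖p‖`, while the numerator `⟪v - t* s, G⟫` of `θ` is at most
`(1 + α_max)(Lγ + τ) ‖s‖ ‖G‖`; the factor `‖s‖` cancels and
`|θ| ‖p‖ ≤ (1 + α_max)(Lγ + τ) ‖G‖ / τ`.
-/

open RealInnerProductSpace

section

variable {E : Type*} [NormedAddCommGroup E] [InnerProductSpace ℝ E]

lemma abs_mul_inner_div_norm_sq_mul_norm_le (c : ℝ) (G p : E) :
    |c * ⟪G, p⟫ / ‖G‖ ^ 2| * ‖G‖ ≤ |c| * ‖p‖ := by
  rcases eq_or_ne G 0 with rfl | hG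
  · simp only [norm_zero, mul_zero]
    positivity
  have hGpos : 0 < ‖G‖ := norm_pos_iff.2 hG
  calc |c * ⟪G, p⟫ / ‖G‖ ^ 2| * ‖G‖ = |c| * |⟪G, p⟫| / ‖G‖ := by
        rw [abs_div, abs_mul, abs_of_pos (by positivity : 0 < ‖G‖ ^ 2)]
        field_simp
    _ ≤ |c| * (‖G‖ * ‖p‖) / ‖G‖ := by
        gcongr
        exact abs_real_inner_le_norm G p
    _ = |c| * ‖p‖ := by field_simp

lemma norm_neg_smul_add_smul_le (lam θ : ℝ) (G p : E) :
    ‖-((lam + θ * ⟪G, p⟫ / ‖G‖ ^ 2) • G) + θ • p‖ ≤ |lam| * ‖G‖ + 2 * (|θ| * ‖p‖) := by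
  calc ‖-((lam + θ * ⟪G, p⟫ / ‖G‖ ^ 2) • G) + θ • p‖
      ≤ |lam + θ * ⟪G, p⟫ / ‖G‖ ^ 2| * ‖G‖ + |θ| * ‖p‖ := by
        refine (norm_add_le _ _).trans_eq ?_
        rw [norm_neg, norm_smul, norm_smul, Real.norm_eq_abs, Real.norm_eq_abs]
    _ ≤ (|lam| + |θ * ⟪G, p⟫ / ‖G‖ ^ 2|) * ‖G‖ + |θ| * ‖p‖ := by
        gcongr
        exact abs_add_le _ _
    _ ≤ |lam| * ‖G‖ + 2 * (|θ| * ‖p‖) := by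
        linarith [abs_mul_inner_div_norm_sq_mul_norm_le θ G p]

lemma norm_add_smul_le {y s : E} {K τ : ℝ} (hy : ‖y‖ ≤ K * ‖s‖) (hτ : 0 ≤ τ) :
    ‖y + τ • s‖ ≤ (K + τ) * ‖s‖ := by
  calc ‖y + τ • s‖ ≤ ‖y‖ + τ * ‖s‖ := by
        refine (norm_add_le _ _).trans_eq ?_
        rw [norm_smul, Real.norm_of_nonneg hτ]
    _ ≤ (K + τ) * ‖s‖ := by linarith

lemma mul_norm_sq_le_inner_add_smul {y s : E} (τ : ℝ) (hys : 0 ≤ ⟪y, s⟫) :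
    τ * ‖s‖ ^ 2 ≤ ⟪s, y + τ • s⟫ := by
  rw [inner_add_right, real_inner_smul_right, real_inner_self_eq_norm_sq, real_inner_comm]
  linarith

lemma abs_mul_inner_div_norm_sq_le (lam : ℝ) {s v : E} {K : ℝ} (hK : 0 ≤ K)
    (hv : ‖v‖ ≤ K * ‖s‖) : |lam * ⟪s, v⟫ / ‖s‖ ^ 2| ≤ |lam| * K := by
  rw [mul_div_assoc, abs_mul]
  gcongr
  rw [abs_div, abs_of_nonneg (by positivity : 0 ≤ ‖s‖ ^ 2)]
  refine div_le_of_le_mul₀ (by positivity) hK ?_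
  calc |⟪s, v⟫| ≤ ‖s‖ * ‖v‖ := abs_real_inner_le_norm s v
    _ ≤ ‖s‖ * (K * ‖s‖) := by gcongr
    _ = K * ‖s‖ ^ 2 := by ring

lemma norm_sub_smul_le {v s : E} {t K : ℝ} (hv : ‖v‖ ≤ K * ‖s‖) :
    ‖v - t • s‖ ≤ (K + |t|) * ‖s‖ := by
  calc ‖v - t • s‖ ≤ ‖v‖ + |t| * ‖s‖ := by
        refine (norm_sub_le _ _).trans_eq ?_
        rw [norm_smul, Real.norm_eq_abs]
    _ ≤ (K + |t|) * ‖s‖ := by linarith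

lemma mul_norm_mul_norm_le_inner_of_eq_smul {s p v : E} {α τ : ℝ} (hα : 0 < α)
    (hs : s = α • p) (hsv : τ * ‖s‖ ^ 2 ≤ ⟪s, v⟫) : τ * ‖s‖ * ‖p‖ ≤ ⟪p, v⟫ := by
  have hs_norm : ‖s‖ = α * ‖p‖ := by rw [hs, norm_smul, Real.norm_of_nonneg hα.le]
  rw [hs, real_inner_smul_left] at hsv
  refine le_of_mul_le_mul_left ?_ hα
  calc α * (τ * ‖s‖ * ‖p‖) = τ * ‖s‖ ^ 2 := by rw [hs_norm]; ring
    _ ≤ α * ⟪p, v⟫ := by rwa [← hs] at hsv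

lemma abs_inner_div_inner_mul_norm_le {w G p v s : E} {C τ : ℝ} (hC : 0 ≤ C)
    (hτ : 0 < τ) (hw : ‖w‖ ≤ C * ‖s‖) (hpv : τ * ‖s‖ * ‖p‖ ≤ |⟪p, v⟫|) :
    |⟪w, G⟫ / ⟪p, v⟫| * ‖p‖ ≤ C / τ * ‖G‖ := by
  rcases eq_or_ne ⟪p, v⟫ 0 with h | h
  · rw [h, div_zero, abs_zero, zero_mul]
    positivity
  rw [abs_div, div_mul_eq_mul_div, div_le_iff₀ (abs_pos.2 h)]
  calc |⟪w, G⟫| * ‖p‖ ≤ ‖w‖ * ‖G‖ * ‖p‖ := by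
        gcongr
        exact abs_real_inner_le_norm w G
    _ ≤ C * ‖s‖ * ‖G‖ * ‖p‖ := by gcongr
    _ = C / τ * ‖G‖ * (τ * ‖s‖ * ‖p‖) := by field_simp
    _ ≤ C / τ * ‖G‖ * |⟪p, v⟫| := by gcongr

end

theorem stmt_16_general (n : ℕ) (Gk p' s y v : EuclideanSpace ℝ (Fin n))
    (τ L γ α : ℝ) (hτ : 0 < τ) (hL : 0 < L) (hγ : 0 < γ) (hα : 0 < α)
    (hsα : s = α • p') (hybound : ‖y‖ ≤ L * γ * ‖s‖) (hys : 0 ≤ ⟪y, s⟫)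
    (hv : v = y + τ • s)
    (αmin αmax lam : ℝ) (hαmin : 0 < αmin)
    (hlam1 : αmin ≤ lam) (hlam2 : lam ≤ αmax)
    (tstar θ M : ℝ) (htstar : tstar = lam * ⟪s, v⟫ / ‖s‖ ^ 2)
    (hθ : θ = ⟪v - tstar • s, Gk⟫ / ⟪p', v⟫)
    (hM : M = lam + θ * ⟪Gk, p'⟫ / ‖Gk‖ ^ 2)
    (pk : EuclideanSpace ℝ (Fin n)) (hpk : pk = -(M • Gk) + θ • p') :
    ‖pk‖ ≤ (αmax + 2 * (1 + αmax) * (L * γ + τ) / τ) * ‖Gk‖ := by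
  have hlam : |lam| ≤ αmax := abs_le.2 ⟨by linarith, hlam2⟩
  have hαmax : 0 ≤ αmax := (abs_nonneg lam).trans hlam
  have hK : 0 ≤ L * γ + τ := by positivity
  have hv_norm : ‖v‖ ≤ (L * γ + τ) * ‖s‖ := hv ▸ norm_add_smul_le hybound hτ.le
  have htstar_abs : |tstar| ≤ αmax * (L * γ + τ) :=
    htstar ▸ (abs_mul_inner_div_norm_sq_le lam hK hv_norm).trans (by gcongr)
  have hw : ‖v - tstar • s‖ ≤ (1 + αmax) * (L * γ + τ) * ‖s‖ :=
    (norm_sub_smul_le hv_norm).trans (by gcongr; linarith)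
  have hpv : τ * ‖s‖ * ‖p'‖ ≤ |⟪p', v⟫| :=
    (mul_norm_mul_norm_le_inner_of_eq_smul hα hsα
      (hv ▸ mul_norm_sq_le_inner_add_smul τ hys)).trans (le_abs_self _)
  have hθp : |θ| * ‖p'‖ ≤ (1 + αmax) * (L * γ + τ) / τ * ‖Gk‖ :=
    hθ ▸ abs_inner_div_inner_mul_norm_le (by positivity) hτ hw hpv
  calc ‖pk‖ ≤ |lam| * ‖Gk‖ + 2 * (|θ| * ‖p'‖) :=
        hpk ▸ hM ▸ norm_neg_smul_add_smul_le lam θ Gk p'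
    _ ≤ αmax * ‖Gk‖ + 2 * ((1 + αmax) * (L * γ + τ) / τ * ‖Gk‖) := by gcongr
    _ = (αmax + 2 * (1 + αmax) * (L * γ + τ) / τ) * ‖Gk‖ := by ring

theorem stmt_16 (n : ℕ) (Gk p' s y v : EuclideanSpace ℝ (Fin n))
    (hGk : Gk ≠ 0) (hp' : p' ≠ 0) (hs : s ≠ 0)
    (τ L γ α : ℝ) (hτ : 0 < τ) (hL : 0 < L) (hγ : 0 < γ) (hα : 0 < α)
    (hsα : s = α • p') (hybound : ‖y‖ ≤ L * γ * ‖s‖) (hys : 0 ≤ ⟪y, s⟫)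
    (hv : v = y + τ • s)
    (αmin αmax lam : ℝ) (hαmin : 0 < αmin) (hαminmax : αmin ≤ αmax)
    (hlam1 : αmin ≤ lam) (hlam2 : lam ≤ αmax)
    (tstar θ M : ℝ) (htstar : tstar = lam * ⟪s, v⟫ / ‖s‖ ^ 2)
    (hθ : θ = ⟪v - tstar • s, Gk⟫ / ⟪p', v⟫)
    (hM : M = lam + θ * ⟪Gk, p'⟫ / ‖Gk‖ ^ 2)
    (pk : EuclideanSpace ℝ (Fin n)) (hpk : pk = -(M • Gk) + θ • p') :
    ‖pk‖ ≤ (αmax + 2 * (1 + αmax) * (L * γ + τ) / τ) * ‖Gk‖ :=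
  stmt_16_general n Gk p' s y v τ L γ α hτ hL hγ hα hsα hybound hys hv αmin αmax lam hαmin hlam1
    hlam2 tstar θ M htstar hθ hM pk hpk
end
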